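/- arXiv:2405.13293 — 6 statements merged into one kernel-verified Lean document; each statement's English description precedes it below -/
import Mathlib

section
/- If there exists an (n,k,λ)-SBIBD with n ≥ 2λ, then the collection of complements of its blocks {V − B₁, ..., V − Bₙ} admits a system of distinct representatives. -/
/-!
By Hall's theorem it suffices that any `s` blocks have at least `s` points outside their
intersection `T`, i.e. `s + |T| ≤ n`. A point of `T` lies in only `k < n` blocks and a block has
only `k` points; if `s ≥ 2` and `|T| ≥ 2`, then two points of `T` share only `λ` blocks and two
blocks of `s` share only `λ` points, so `s + |T| ≤ 2λ ≤ n`. That two blocks of a symmetric design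
meet in exactly `λ` points is a variance computation: for a fixed block `j`, the sizes
`x i = |B j ∩ B i|` satisfy `∑ x i = k²` and `∑ x i (x i - 1) = k (k - 1) λ`, which together with
`λ (n - 1) = k (k - 1)` give `∑ (x i - λ)² = (k - λ)²`, the term `i = j` alone.
-/

open scoped Classical
open Finset

/-- The set of common out-neighbors of the vertex set `S` in the digraph
with arc relation `A`. -/
noncomputable def commonOut {V : Type*} [Fintype V] (A : V → V → Prop) (S : Finset V) : Finset V :=
  Finset.univ.filter fun w => ∀ v ∈ S, A v w

/-- The set of common in-neighbors of the vertex set `S`. -/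
noncomputable def commonIn {V : Type*} [Fintype V] (A : V → V → Prop) (S : Finset V) : Finset V :=
  Finset.univ.filter fun w => ∀ v ∈ S, A w v

/-- A `(t,λ)`-liking digraph: every `t` distinct vertices have exactly `λ`
common out-neighbors. -/
def IsLiking {V : Type*} [Fintype V] (A : V → V → Prop) (t lam : ℕ) : Prop :=
  ∀ S : Finset V, S.card = t → (commonOut A S).card = lam

/-- A two-way `(t,λ)`-liking digraph: every `t` distinct vertices have exactly `λ`
common out-neighbors and exactly `λ` common in-neighbors. -/
def IsTwoWayLiking {V : Type*} [Fintype V] (A : V → V → Prop) (t lam : ℕ) : Prop :=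
  IsLiking A t lam ∧ ∀ S : Finset V, S.card = t → (commonIn A S).card = lam

/-- Out-degree of a vertex in the digraph with arc relation `A`. -/
noncomputable def outDeg {V : Type*} [Fintype V] (A : V → V → Prop) (v : V) : ℕ :=
  (Finset.univ.filter fun w => A v w).card

/-- In-degree of a vertex. -/
noncomputable def inDeg {V : Type*} [Fintype V] (A : V → V → Prop) (v : V) : ℕ :=
  (Finset.univ.filter fun w => A w v).card

theorem Finset.natCast_card_offDiag {α : Type*} [DecidableEq α] (s : Finset α) :
    (#s.offDiag : ℤ) = #s * #s - #s := by
  rw [offDiag_card, Nat.cast_sub (Nat.le_mul_self _), Nat.cast_mul]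

namespace SymmetricDesign

variable {ι V : Type*} [Fintype ι] [DecidableEq V] {B : ι → Finset V} {k lam : ℕ}

theorem sum_card_inter_eq (hvar : ∀ v : V, #{i | v ∈ B i} = k) (S : Finset V) :
    ∑ i, #(S ∩ B i) = #S * k := by
  have hcount := sum_card_bipartiteAbove_eq_sum_card_bipartiteBelow
    (s := (univ : Finset ι)) (t := S) (r := fun i v => v ∈ B i)
  simp only [bipartiteAbove, bipartiteBelow, filter_mem_eq_inter] at hcount
  rw [hcount, sum_congr rfl fun v _ => hvar v, sum_const, smul_eq_mul]

theorem sum_card_offDiag_inter_eq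
    (hpair : ∀ u v : V, u ≠ v → #{i | u ∈ B i ∧ v ∈ B i} = lam) (S : Finset V) :
    ∑ i, #(S ∩ B i).offDiag = #S.offDiag * lam := by
  have hcount := sum_card_bipartiteAbove_eq_sum_card_bipartiteBelow
    (s := (univ : Finset ι)) (t := S.offDiag) (r := fun i p => p.1 ∈ B i ∧ p.2 ∈ B i)
  have hoffDiag : ∀ i, {p ∈ S.offDiag | p.1 ∈ B i ∧ p.2 ∈ B i} = (S ∩ B i).offDiag := by
    intro i
    ext p
    simp only [mem_filter, mem_offDiag, mem_inter]
    tauto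
  simp only [bipartiteAbove, bipartiteBelow, hoffDiag] at hcount
  rw [hcount, sum_congr rfl fun p hp => hpair p.1 p.2 (mem_offDiag.mp hp).2.2, sum_const,
    smul_eq_mul]

variable [Fintype V]

theorem mul_sub_one_eq_lam_mul_card_sub_one [Nonempty ι]
    (hcard : Fintype.card ι = Fintype.card V) (hblock : ∀ i, #(B i) = k)
    (hpair : ∀ u v : V, u ≠ v → #{i | u ∈ B i ∧ v ∈ B i} = lam) :
    (k : ℤ) * (k - 1) = lam * (Fintype.card V - 1) := by
  have hcount : (∑ i, #(univ ∩ B i).offDiag : ℤ) = #(univ : Finset V).offDiag * lam := by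
    exact_mod_cast sum_card_offDiag_inter_eq hpair univ
  simp only [univ_inter, natCast_card_offDiag, hblock, sum_const, card_univ, nsmul_eq_mul,
    hcard] at hcount
  have hpos : (0 : ℤ) < Fintype.card V := by
    rw [← hcard]; exact_mod_cast Fintype.card_pos
  nlinarith

theorem card_inter_eq_lam [DecidableEq ι]
    (hcard : Fintype.card ι = Fintype.card V) (hblock : ∀ i, #(B i) = k)
    (hvar : ∀ v : V, #{i | v ∈ B i} = k)
    (hpair : ∀ u v : V, u ≠ v → #{i | u ∈ B i ∧ v ∈ B i} = lam) {i j : ι} (hij : i ≠ j) :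
    #(B j ∩ B i) = lam := by
  have : Nonempty ι := ⟨i⟩
  set x : ι → ℤ := fun i => #(B j ∩ B i)
  have hfirst : ∑ i, x i = k * k := by
    simp only [x]; exact_mod_cast hblock j ▸ sum_card_inter_eq hvar (B j)
  have hsecond : ∑ i, (x i * x i - x i) = (k * k - k) * lam := by
    have hcount := congrArg (Nat.cast : ℕ → ℤ) (sum_card_offDiag_inter_eq hpair (B j))
    push_cast [natCast_card_offDiag, hblock] at hcount
    exact hcount
  have hfisher := mul_sub_one_eq_lam_mul_card_sub_one hcard hblock hpair
  have hxj : x j = k := by simp [x, hblock]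
  have hvariance : ∑ i, (x i - lam) ^ 2 = (k - lam) ^ 2 := by
    have expand : ∀ i,
        (x i - (lam : ℤ)) ^ 2 = (x i * x i - x i) + (1 - 2 * lam) * x i + lam ^ 2 :=
      fun i => by ring
    simp only [expand, sum_add_distrib, ← mul_sum, hfirst, hsecond, sum_const, card_univ,
      nsmul_eq_mul, hcard]
    linear_combination (-lam : ℤ) * hfisher
  have hzero : ∑ i ∈ univ.erase j, (x i - lam) ^ 2 = 0 := by
    rw [← add_sum_erase _ _ (mem_univ j), hxj] at hvariance
    linarith
  have hxi := (sum_eq_zero_iff_of_nonneg fun i _ => sq_nonneg (x i - lam)).mp hzero i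
    (mem_erase.mpr ⟨hij, mem_univ i⟩)
  have hxi_eq : (#(B j ∩ B i) : ℤ) = lam :=
    sub_eq_zero.mp (pow_eq_zero_iff two_ne_zero |>.mp hxi)
  exact_mod_cast hxi_eq

theorem card_add_card_commonPoints_le [DecidableEq ι]
    (hcard : Fintype.card ι = Fintype.card V) (hblock : ∀ i, #(B i) = k)
    (hvar : ∀ v : V, #{i | v ∈ B i} = k)
    (hpair : ∀ u v : V, u ≠ v → #{i | u ∈ B i ∧ v ∈ B i} = lam)
    (hk : k < Fintype.card V) (hlam : 2 * lam ≤ Fintype.card V) {s : Finset ι}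
    (hs : s.Nonempty) : #s + #{v | ∀ i ∈ s, v ∈ B i} ≤ Fintype.card V := by
  set T : Finset V := {v | ∀ i ∈ s, v ∈ B i}
  have mem_T {v} (hv : v ∈ T) : ∀ i ∈ s, v ∈ B i := (mem_filter.mp hv).2
  obtain ⟨i₀, hi₀⟩ := hs
  have hs_le : #s ≤ Fintype.card V := hcard ▸ card_le_univ s
  have hT_le : #T ≤ k := hblock i₀ ▸ card_le_card fun v hv => mem_T hv i₀ hi₀
  rcases (by omega : #T = 0 ∨ #T = 1 ∨ 2 ≤ #T) with hT | hT | hT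
  · omega
  · obtain ⟨v, hv⟩ := card_eq_one.mp hT
    have hs_le_k : #s ≤ k := hvar v ▸ card_le_card fun i hi =>
      mem_filter.mpr ⟨mem_univ i, mem_T (hv ▸ mem_singleton_self v) i hi⟩
    omega
  · obtain ⟨u, hu, v, hv, huv⟩ := one_lt_card.mp hT
    have hs_le_lam : #s ≤ lam := hpair u v huv ▸ card_le_card fun i hi =>
      mem_filter.mpr ⟨mem_univ i, mem_T hu i hi, mem_T hv i hi⟩
    rcases (by omega : #s ≤ 1 ∨ 2 ≤ #s) with hs | hs
    · omega
    · obtain ⟨i, hi, j, hj, hij⟩ := one_lt_card.mp hs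
      have hT_le_lam : #T ≤ lam := card_inter_eq_lam hcard hblock hvar hpair hij ▸
        card_le_card fun v hv => mem_inter.mpr ⟨mem_T hv j hj, mem_T hv i hi⟩
      omega

theorem exists_injective_notMem [DecidableEq ι]
    (hcard : Fintype.card ι = Fintype.card V) (hblock : ∀ i, #(B i) = k)
    (hvar : ∀ v : V, #{i | v ∈ B i} = k)
    (hpair : ∀ u v : V, u ≠ v → #{i | u ∈ B i ∧ v ∈ B i} = lam)
    (hk : k < Fintype.card V) (hlam : 2 * lam ≤ Fintype.card V) :
    ∃ f : ι → V, Function.Injective f ∧ ∀ i, f i ∉ B i := by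
  suffices hHall : ∀ s : Finset ι, #s ≤ #(s.biUnion fun i => (B i)ᶜ) by
    obtain ⟨f, hf, hfB⟩ := (all_card_le_biUnion_card_iff_exists_injective _).mp hHall
    exact ⟨f, hf, fun i => mem_compl.mp (hfB i)⟩
  intro s
  rcases s.eq_empty_or_nonempty with rfl | hs
  · simp
  have hunion : s.biUnion (fun i => (B i)ᶜ) = ({v | ∀ i ∈ s, v ∈ B i} : Finset V)ᶜ := by
    ext v
    simp
  have := card_add_card_commonPoints_le hcard hblock hvar hpair hk hlam hs
  rw [hunion, card_compl]
  omega

end SymmetricDesign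

theorem stmt_3_general {V : Type*} [Fintype V] [DecidableEq V] (n k lam : ℕ)
    (hV : Fintype.card V = n) (B : Fin n → Finset V)
    (hkn : k < n) (hn : 2 * lam ≤ n)
    (hblock : ∀ i, (B i).card = k)
    (hvar : ∀ v : V, (Finset.univ.filter fun i => v ∈ B i).card = k)
    (hpair : ∀ u v : V, u ≠ v →
      (Finset.univ.filter fun i => u ∈ B i ∧ v ∈ B i).card = lam) :
    ∃ f : Fin n → V, Function.Injective f ∧ ∀ i, f i ∉ B i := by
  subst hV
  exact SymmetricDesign.exists_injective_notMem (Fintype.card_fin _) hblock hvar hpair hkn hn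

/-- In an `(n,k,λ)`-SBIBD with `n ≥ 2λ`, the complements of the blocks admit a
system of distinct representatives. -/
theorem stmt_3 {V : Type*} [Fintype V] [DecidableEq V] (n k lam : ℕ)
    (hV : Fintype.card V = n) (B : Fin n → Finset V)
    (hkn : k < n) (hlam : 0 < lam) (hn : 2 * lam ≤ n)
    (hblock : ∀ i, (B i).card = k)
    (hvar : ∀ v : V, (Finset.univ.filter fun i => v ∈ B i).card = k)
    (hpair : ∀ u v : V, u ≠ v →
      (Finset.univ.filter fun i => u ∈ B i ∧ v ∈ B i).card = lam) :
    ∃ f : Fin n → V, Function.Injective f ∧ ∀ i, f i ∉ B i :=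
  stmt_3_general n k lam hV B hkn hn hblock hvar hpair
end

section
/- If there exists an (n,k,λ)-SBIBD with n ≥ 2λ, then there exists a k-diregular two-way (2,λ)-liking digraph of order n. -/
open scoped Classical
open Finset

/-!
The blocks of a symmetric design meet pairwise in `λ` points: for a fixed block `B j`, double
counting gives `∑ i, |B i ∩ B j| = k²` and `∑ i, |B i ∩ B j| (|B i ∩ B j| - 1) = λ k (k - 1)`,
which together with Fisher's relation `k (k - 1) = λ (n - 1)` force
`∑ i ≠ j, (|B i ∩ B j| - λ)² = 0`.
The non-incidences form an `(n - k)`-regular bipartite graph between points and blocks, so by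
Hall's theorem some bijection `σ` from points to blocks has `v ∉ B (σ v)` for all `v`. The digraph
with `v → w` iff `w ∈ B (σ v)` is then loopless and `k`-diregular; the common out-neighbours of
`u ≠ v` form `B (σ u) ∩ B (σ v)`, and their common in-neighbours correspond under `σ` to the `λ`
blocks through both.
-/

theorem Finset.sum_card_inter_eq_sum_card_filter_mem {α ι : Type*} [DecidableEq α]
    (B : ι → Finset α) (s : Finset ι) (t : Finset α) :
    ∑ i ∈ s, #(t ∩ B i) = ∑ a ∈ t, #{i ∈ s | a ∈ B i} := by
  simpa [bipartiteAbove, bipartiteBelow, filter_mem_eq_inter] using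
    sum_card_bipartiteAbove_eq_sum_card_bipartiteBelow (fun i a => a ∈ B i) (s := s) (t := t)

theorem Fintype.exists_injective_of_card_filter_eq_of_card_filter_le {α β : Type*}
    [Fintype α] [Fintype β] (r : α → β → Prop) [DecidableRel r] {d : ℕ} (hd : 0 < d)
    (hleft : ∀ a, #{b | r a b} = d) (hright : ∀ b, #{a | r a b} ≤ d) :
    ∃ f : α → β, Function.Injective f ∧ ∀ a, r a (f a) := by
  refine (Fintype.all_card_le_filter_rel_iff_exists_injective r).mp fun A => ?_
  have hcount := card_nsmul_le_card_nsmul (R := ℕ) r (s := A) (t := {b | ∃ a ∈ A, r a b})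
    (m := d) (n := d) (fun a ha => (hleft a).symm.le.trans (card_le_card fun b hb => by
      simp only [mem_filter, mem_univ, true_and] at hb
      exact (mem_bipartiteAbove r).mpr ⟨by simpa using ⟨a, ha, hb⟩, hb⟩))
    (fun b _ => (card_le_card (filter_subset_filter _ (subset_univ A))).trans (hright b))
  simp only [smul_eq_mul] at hcount
  exact Nat.le_of_mul_le_mul_right hcount hd

namespace SymmetricDesign

variable {V ι : Type*} [Fintype ι] [DecidableEq V] (B : ι → Finset V) {k lam : ℕ}

theorem mul_self_eq_add_card_sub_one_mul [Fintype V] (hblock : ∀ i, #(B i) = k)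
    (hvar : ∀ v, #{i | v ∈ B i} = k)
    (hpair : ∀ u v, u ≠ v → #{i | u ∈ B i ∧ v ∈ B i} = lam) (u : V) :
    k * k = k + (Fintype.card V - 1) * lam :=
  calc k * k = ∑ i ∈ {i | u ∈ B i}, #(univ ∩ B i) := by
        rw [sum_const_nat fun i _ => by rw [univ_inter, hblock], hvar]
    _ = ∑ v, #{i | u ∈ B i ∧ v ∈ B i} := by
        rw [sum_card_inter_eq_sum_card_filter_mem]
        simp only [filter_filter]
    _ = k + (Fintype.card V - 1) * lam := by
        rw [← add_sum_erase _ _ (mem_univ u),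
          sum_const_nat fun v hv => hpair u v (ne_of_mem_erase hv).symm,
          card_erase_of_mem (mem_univ u), card_univ]
        simp only [and_self, hvar]

theorem sum_card_inter (hvar : ∀ v, #{i | v ∈ B i} = k) (t : Finset V) :
    ∑ i, #(t ∩ B i) = #t * k := by
  rw [sum_card_inter_eq_sum_card_filter_mem, sum_const_nat fun v _ => hvar v]

theorem sum_card_offDiag_inter (hpair : ∀ u v, u ≠ v → #{i | u ∈ B i ∧ v ∈ B i} = lam)
    (t : Finset V) :
    ∑ i, #(t ∩ B i).offDiag = #t.offDiag * lam := by
  simp_rw [offDiag_inter]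
  rw [sum_card_inter_eq_sum_card_filter_mem (fun i => (B i).offDiag)]
  refine sum_const_nat fun p hp => ?_
  rw [← hpair p.1 p.2 (mem_offDiag.mp hp).2.2]
  congr 1
  ext i
  simp [mem_offDiag, (mem_offDiag.mp hp).2.2]

theorem sum_sq_card_inter_sub [Fintype V] [Nonempty V] (hcard : Fintype.card ι = Fintype.card V)
    (hblock : ∀ i, #(B i) = k) (hvar : ∀ v, #{i | v ∈ B i} = k)
    (hpair : ∀ u v, u ≠ v → #{i | u ∈ B i ∧ v ∈ B i} = lam) (j : ι) :
    ∑ i, ((#(B j ∩ B i) : ℤ) - lam) ^ 2 = ((k : ℤ) - lam) ^ 2 := by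
  have hsum : ∑ i, (#(B j ∩ B i) : ℤ) = k * k := by
    exact_mod_cast (sum_card_inter B hvar (B j)).trans (by rw [hblock])
  have hoff : ∑ i, ((#(B j ∩ B i) : ℤ) * #(B j ∩ B i) - #(B j ∩ B i)) = lam * (k * k - k) := by
    have := sum_card_offDiag_inter B hpair (B j)
    simp only [offDiag_card, hblock] at this
    rw [← Nat.cast_inj (R := ℤ)] at this
    push_cast [Nat.cast_sum, Nat.cast_sub (Nat.le_mul_self _)] at this
    linear_combination this
  have hfisher : (k : ℤ) * k = k + (Fintype.card V - 1) * lam := by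
    have h := mul_self_eq_add_card_sub_one_mul B hblock hvar hpair (Classical.arbitrary V)
    zify [Fintype.card_pos (α := V)] at h
    exact h
  calc ∑ i, ((#(B j ∩ B i) : ℤ) - lam) ^ 2
      = ∑ i, (((#(B j ∩ B i) : ℤ) * #(B j ∩ B i) - #(B j ∩ B i))
          + (1 - 2 * lam) * #(B j ∩ B i) + (lam : ℤ) ^ 2) :=
        sum_congr rfl fun _ _ => by ring
    _ = lam * (k * k - k) + (1 - 2 * lam) * (k * k) + Fintype.card ι * (lam : ℤ) ^ 2 := by
        rw [sum_add_distrib, sum_add_distrib, ← mul_sum, hoff, hsum, sum_const, card_univ,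
          nsmul_eq_mul]
    _ = ((k : ℤ) - lam) ^ 2 := by
        rw [hcard]
        linear_combination (-(lam : ℤ)) * hfisher

theorem card_inter_eq_of_ne [Fintype V] (hcard : Fintype.card ι = Fintype.card V)
    (hblock : ∀ i, #(B i) = k) (hvar : ∀ v, #{i | v ∈ B i} = k)
    (hpair : ∀ u v, u ≠ v → #{i | u ∈ B i ∧ v ∈ B i} = lam) {i j : ι} (hij : i ≠ j) :
    #(B j ∩ B i) = lam := by
  have : Nonempty V := Fintype.card_pos_iff.mp (hcard ▸ Fintype.card_pos_iff.mpr ⟨j⟩)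
  have h := sum_sq_card_inter_sub B hcard hblock hvar hpair j
  rw [← add_sum_erase _ _ (mem_univ j), inter_self, hblock, add_eq_left,
    sum_eq_zero_iff_of_nonneg fun _ _ => sq_nonneg _] at h
  have hi := h i (mem_erase.mpr ⟨hij, mem_univ i⟩)
  rw [sq_eq_zero_iff, sub_eq_zero] at hi
  exact_mod_cast hi

theorem exists_equiv_forall_notMem [Fintype V] (hcard : Fintype.card ι = Fintype.card V)
    (hk : k < Fintype.card V) (hblock : ∀ i, #(B i) = k) (hvar : ∀ v, #{i | v ∈ B i} = k) :
    ∃ σ : V ≃ ι, ∀ v, v ∉ B (σ v) := by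
  have hleft (v : V) : #{i | v ∉ B i} = Fintype.card V - k := by
    have := card_filter_add_card_filter_not (s := univ) (fun i => v ∈ B i)
    rw [hvar, card_univ, hcard] at this
    omega
  have hright (i : ι) : #{v | v ∉ B i} = Fintype.card V - k := by
    have := card_filter_add_card_filter_not (s := univ) (· ∈ B i)
    rw [filter_mem_eq_inter, univ_inter, hblock, card_univ] at this
    omega
  obtain ⟨f, hf, hfB⟩ := Fintype.exists_injective_of_card_filter_eq_of_card_filter_le
    (fun v i => v ∉ B i) (Nat.sub_pos_of_lt hk) hleft fun i => (hright i).le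
  have hbij := (Fintype.bijective_iff_injective_and_card f).mpr ⟨hf, hcard.symm⟩
  exact ⟨Equiv.ofBijective f hbij, hfB⟩

end SymmetricDesign

section BlockDigraph

variable {V ι : Type*} [Fintype V] (B : ι → Finset V) (σ : V ≃ ι)

def blockDigraph (v w : V) : Prop := w ∈ B (σ v)

theorem commonOut_blockDigraph_pair [DecidableEq V] (u v : V) :
    commonOut (blockDigraph B σ) {u, v} = B (σ u) ∩ B (σ v) := by
  ext w
  simp [commonOut, blockDigraph]

theorem card_commonIn_blockDigraph [Fintype ι] (S : Finset V) :
    #(commonIn (blockDigraph B σ) S) = #{i | ∀ v ∈ S, v ∈ B i} :=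
  card_equiv σ fun w => by
    simp only [commonIn, mem_filter, mem_univ, true_and]
    rfl

theorem outDeg_blockDigraph (v : V) : outDeg (blockDigraph B σ) v = #(B (σ v)) := by
  unfold outDeg
  congr 1
  ext w
  simp only [mem_filter, mem_univ, true_and]
  rfl

theorem inDeg_blockDigraph [Fintype ι] [DecidableEq V] (v : V) :
    inDeg (blockDigraph B σ) v = #{i | v ∈ B i} :=
  card_equiv σ fun w => by
    simp only [mem_filter, mem_univ, true_and]
    rfl

end BlockDigraph

theorem stmt_4_general {V : Type*} [Fintype V] [DecidableEq V] (n k lam : ℕ)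
    (hV : Fintype.card V = n) (B : Fin n → Finset V)
    (hkn : k < n)
    (hblock : ∀ i, (B i).card = k)
    (hvar : ∀ v : V, (Finset.univ.filter fun i => v ∈ B i).card = k)
    (hpair : ∀ u v : V, u ≠ v →
      (Finset.univ.filter fun i => u ∈ B i ∧ v ∈ B i).card = lam) :
    ∃ A : V → V → Prop, Irreflexive A ∧ IsTwoWayLiking A 2 lam ∧
      ∀ v : V, outDeg A v = k ∧ inDeg A v = k := by
  have hcard : Fintype.card (Fin n) = Fintype.card V := by rw [Fintype.card_fin, hV]
  obtain ⟨σ, hσ⟩ := SymmetricDesign.exists_equiv_forall_notMem B hcard (hV ▸ hkn) hblock hvar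
  refine ⟨blockDigraph B σ, hσ, ⟨fun S hS => ?_, fun S hS => ?_⟩, fun v => ⟨?_, ?_⟩⟩
  · obtain ⟨u, v, huv, rfl⟩ := card_eq_two.mp hS
    rw [commonOut_blockDigraph_pair]
    exact SymmetricDesign.card_inter_eq_of_ne B hcard hblock hvar hpair (σ.injective.ne huv.symm)
  · obtain ⟨u, v, huv, rfl⟩ := card_eq_two.mp hS
    rw [card_commonIn_blockDigraph]
    simpa using hpair u v huv
  · rw [outDeg_blockDigraph, hblock]
  · rw [inDeg_blockDigraph, hvar]

/-- If an `(n,k,λ)`-SBIBD with `n ≥ 2λ` exists, then a `k`-diregular two-way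
`(2,λ)`-liking digraph of order `n` exists. -/
theorem stmt_4 {V : Type*} [Fintype V] [DecidableEq V] (n k lam : ℕ)
    (hV : Fintype.card V = n) (B : Fin n → Finset V)
    (hkn : k < n) (hlam : 0 < lam) (hn : 2 * lam ≤ n)
    (hblock : ∀ i, (B i).card = k)
    (hvar : ∀ v : V, (Finset.univ.filter fun i => v ∈ B i).card = k)
    (hpair : ∀ u v : V, u ≠ v →
      (Finset.univ.filter fun i => u ∈ B i ∧ v ∈ B i).card = lam) :
    ∃ A : V → V → Prop, Irreflexive A ∧ IsTwoWayLiking A 2 lam ∧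
      ∀ v : V, outDeg A v = k ∧ inDeg A v = k :=
  stmt_4_general n k lam hV B hkn hblock hvar hpair
end

section
/- For every positive integer λ, every (λ+1,λ)-liking digraph is a two-way (λ+1,λ)-liking digraph; i.e., if every λ+1 vertices of a digraph D have exactly λ common out-neighbors, then every λ+1 vertices also have exactly λ common in-neighbors. -/
open scoped Classical
open Finset

/-!
Counting pairs `(S, w)` with `S ⊆ N⁻(w)` in two ways gives
`∑_{|S| = λ+1} |commonOut S| = ∑_w C(d⁻ w, λ+1)`, and dually for `commonIn` with `d⁺`.
So once `d⁺ = d⁻`, the common in-neighbourhoods of the `(λ+1)`-sets have total size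
`λ · C(n, λ+1)`; as each has size at most `λ` (`λ+1` common in-neighbours of `S` would have the
`λ+1` vertices of `S` as common out-neighbours), each has size exactly `λ`.

For `d⁻ v ≤ d⁺ v` (equality then follows by summing over `v`), take the in-neighbours of `v` as
points and its out-neighbours `w` as blocks, `w` containing the points of `N⁻(w)`. The blocks
containing a set `R` of points form `commonOut (insert v R)`, so every `λ`-set of points lies in
exactly `λ` blocks, and every `(λ-1)`-set in more than `λ`. A Fisher-type inequality then gives
`#points ≤ #blocks`: for a kernel vector `y` of the incidence matrix, each `(λ-1)`-set `R` has
`(m_R - λ) y(R) = -λ y(U)`, and summing `(m_R - λ) y(R)²` over all `R` forces `y = 0`.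
For `λ = 1` the same inequality applies with pairs of points in no block and single points in one.
-/

namespace Finset

variable {α : Type*}

theorem card_filter_mem_powersetCard_succ {U : Finset α} {q : α} (hq : q ∈ U) (k : ℕ) :
    #{R ∈ powersetCard (k + 1) U | q ∈ R} = (#U - 1).choose k := by
  have hsplit := card_filter_add_card_filter_not (s := powersetCard (k + 1) U) (q ∈ ·)
  have hnot : {R ∈ powersetCard (k + 1) U | q ∉ R} = powersetCard (k + 1) (U.erase q) := by
    ext R
    simp only [mem_filter, mem_powersetCard, subset_erase]
    tauto
  obtain ⟨n, hn⟩ : ∃ n, #U = n + 1 := ⟨#U - 1, by have := card_pos.2 ⟨q, hq⟩; omega⟩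
  rw [hnot, card_powersetCard, card_powersetCard, card_erase_of_mem hq, hn, Nat.add_sub_cancel,
    Nat.choose_succ_succ'] at hsplit
  rw [hn, Nat.add_sub_cancel]
  omega

theorem sum_powersetCard_succ_sum {M : Type*} [AddCommMonoid M] (U : Finset α) (k : ℕ)
    (y : α → M) :
    ∑ R ∈ powersetCard (k + 1) U, ∑ q ∈ R, y q = (#U - 1).choose k • ∑ q ∈ U, y q := by
  calc ∑ R ∈ powersetCard (k + 1) U, ∑ q ∈ R, y q
      = ∑ q ∈ U, ∑ R ∈ powersetCard (k + 1) U with q ∈ R, y q := by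
        refine sum_comm' fun R q => ?_
        simp only [mem_filter, mem_powersetCard]
        exact ⟨fun ⟨⟨hRU, hR⟩, hq⟩ => ⟨⟨⟨hRU, hR⟩, hq⟩, hRU hq⟩, fun ⟨hRq, _⟩ => hRq⟩
    _ = ∑ q ∈ U, (#U - 1).choose k • y q := by
        refine sum_congr rfl fun q hq => ?_
        rw [sum_const, card_filter_mem_powersetCard_succ hq]
    _ = (#U - 1).choose k • ∑ q ∈ U, y q := (smul_sum ..).symm

theorem eq_zero_of_forall_sum_powersetCard_eq_zero {K : Type*} [Field K] [CharZero K]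
    {U : Finset α} {k : ℕ} {y : α → K} (hk : k ≠ 0) (hkU : k < #U)
    (h : ∀ R ⊆ U, #R = k → ∑ q ∈ R, y q = 0) : ∀ q ∈ U, y q = 0 := by
  intro q hq
  obtain ⟨R, hRU, hR⟩ := exists_subset_card_eq (s := U.erase q) (n := k)
    (by rw [card_erase_of_mem hq]; omega)
  have hRU' : R ⊆ U := hRU.trans (erase_subset q U)
  have hqR : q ∉ R := fun hqR => by simpa using hRU hqR
  -- swapping any `r ∈ R` for `q` keeps the sum at zero, so `y` is constant on `insert q R`
  have hconst : ∀ r ∈ R, y r = y q := by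
    intro r hr
    have hqR' : q ∉ R.erase r := fun h' => hqR (mem_of_mem_erase h')
    have := h (insert q (R.erase r)) (insert_subset hq ((erase_subset r R).trans hRU'))
      (by rw [card_insert_of_notMem hqR', card_erase_of_mem hr]; omega)
    rw [sum_insert hqR', sum_erase_eq_sub hr, h R hRU' hR] at this
    linear_combination -this
  have := h R hRU' hR
  rw [sum_congr rfl hconst, sum_const, hR, nsmul_eq_mul] at this
  exact (mul_eq_zero.mp this).resolve_left (by exact_mod_cast hk)

end Finset

section Fisher

variable {α β : Type*}

theorem exists_ne_zero_forall_sum_inter_eq_zero (K : Type*) [Field K] {U : Finset α}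
    {W : Finset β} (B : β → Finset α) (hWU : #W < #U) :
    ∃ y : α → K, (∃ q ∈ U, y q ≠ 0) ∧ ∀ w ∈ W, ∑ q ∈ U ∩ B w, y q = 0 := by
  let column : α → W → K := fun q w => if q ∈ B w then 1 else 0
  have hdep : ¬LinearIndepOn K column (U : Set α) := fun hind => by
    have := hind.fintype_card_le_finrank
    simp only [Module.finrank_fintype_fun_eq_card, Fintype.card_coe, coe_sort_coe] at this
    omega
  obtain ⟨y, hy, q, hqU, hq⟩ := not_linearIndepOn_finset_iff.mp hdep
  refine ⟨y, ⟨q, hqU, hq⟩, fun w hw => ?_⟩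
  have := congrFun hy ⟨w, hw⟩
  simpa [column, ← sum_ite_mem] using this

theorem card_sub_mul_sum_eq_neg_mul_sum {K : Type*} [Field K] {U : Finset α} {W : Finset β}
    {B : β → Finset α} {y : α → K} (hy : ∀ w ∈ W, ∑ q ∈ U ∩ B w, y q = 0)
    {R : Finset α} (hRU : R ⊆ U) {μ : ℕ} (hμ : ∀ q ∈ U \ R, #{w ∈ W | insert q R ⊆ B w} = μ) :
    ((#{w ∈ W | R ⊆ B w} : K) - μ) * ∑ q ∈ R, y q = -(μ * ∑ q ∈ U, y q) := by
  set C := {w ∈ W | R ⊆ B w} with hC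
  have hzero : ∑ q ∈ U, (#{w ∈ C | q ∈ B w} : K) * y q = 0 := by
    calc ∑ q ∈ U, (#{w ∈ C | q ∈ B w} : K) * y q
        = ∑ w ∈ C, ∑ q ∈ U ∩ B w, y q := by
          simp only [← nsmul_eq_mul, ← sum_const, sum_filter, ← sum_ite_mem]
          exact sum_comm
      _ = 0 := sum_eq_zero fun w hw => hy w (filter_subset _ _ hw)
  have houtside : ∀ q ∈ U \ R, (#{w ∈ C | q ∈ B w} : K) * y q = μ * y q := by
    intro q hq
    rw [← hμ q hq, filter_filter]
    congr 3
    exact filter_congr fun w _ => by rw [insert_subset_iff, and_comm]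
  have hinside : ∀ q ∈ R, (#{w ∈ C | q ∈ B w} : K) * y q = #C * y q := by
    intro q hq
    rw [filter_true_of_mem]
    intro w hw
    rw [hC, mem_filter] at hw
    exact hw.2 hq
  rw [← sum_sdiff hRU, sum_congr rfl houtside, sum_congr rfl hinside, ← mul_sum, ← mul_sum,
    sum_sdiff_eq_sub hRU] at hzero
  linear_combination hzero

theorem card_points_le_card_blocks {U : Finset α} {W : Finset β} (B : β → Finset α) {k μ : ℕ}
    (hk : k ≠ 0) (hkU : k < #U)
    (hcover : ∀ R ⊆ U, #R = k + 1 → #{w ∈ W | R ⊆ B w} = μ)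
    (hgap : ∀ R ⊆ U, #R = k → μ < #{w ∈ W | R ⊆ B w}) : #U ≤ #W := by
  by_contra! hWU
  obtain ⟨y, ⟨q, hqU, hq⟩, hy⟩ := exists_ne_zero_forall_sum_inter_eq_zero ℚ B hWU
  set Y := ∑ q ∈ U, y q
  set excess : Finset α → ℚ := fun R => (#{w ∈ W | R ⊆ B w} : ℚ) - μ
  have hidentity : ∀ R ∈ powersetCard k U, excess R * ∑ q ∈ R, y q = -(μ * Y) := by
    intro R hR
    obtain ⟨hRU, hRk⟩ := mem_powersetCard.mp hR
    refine card_sub_mul_sum_eq_neg_mul_sum hy hRU fun q hq => hcover _ ?_ ?_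
    · exact insert_subset (mem_sdiff.mp hq).1 hRU
    · rw [card_insert_of_notMem (mem_sdiff.mp hq).2, hRk]
  have hexcess : ∀ R ∈ powersetCard k U, 0 < excess R := fun R hR => by
    obtain ⟨hRU, hRk⟩ := mem_powersetCard.mp hR
    exact sub_pos.mpr (by exact_mod_cast hgap R hRU hRk)
  have hterm : ∀ R ∈ powersetCard k U, 0 ≤ excess R * (∑ q ∈ R, y q) ^ 2 :=
    fun R hR => mul_nonneg (hexcess R hR).le (sq_nonneg _)
  -- every point lies in equally many `k`-subsets of `U`, so the identity sums to `-μ c Y² ≤ 0`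
  have hsum : ∑ R ∈ powersetCard k U, excess R * (∑ q ∈ R, y q) ^ 2 ≤ 0 := by
    obtain ⟨k, rfl⟩ := Nat.exists_eq_add_one_of_ne_zero hk
    calc ∑ R ∈ powersetCard (k + 1) U, excess R * (∑ q ∈ R, y q) ^ 2
        = ∑ R ∈ powersetCard (k + 1) U, -(μ * Y) * ∑ q ∈ R, y q :=
          sum_congr rfl fun R hR => by rw [sq, ← mul_assoc, hidentity R hR]
      _ = -(μ * (#U - 1).choose k * Y ^ 2) := by
          rw [← mul_sum, sum_powersetCard_succ_sum, nsmul_eq_mul]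
          ring
      _ ≤ 0 := neg_nonpos.mpr (by positivity)
  have hzero : ∀ R ⊆ U, #R = k → ∑ q ∈ R, y q = 0 := by
    intro R hRU hRk
    have hR : R ∈ powersetCard k U := mem_powersetCard.mpr ⟨hRU, hRk⟩
    have := (sum_eq_zero_iff_of_nonneg hterm).mp (hsum.antisymm (sum_nonneg hterm)) R hR
    exact pow_eq_zero_iff two_ne_zero |>.mp <| (mul_eq_zero.mp this).resolve_left (hexcess R hR).ne'
  exact hq (eq_zero_of_forall_sum_powersetCard_eq_zero hk hkU hzero q hqU)

end Fisher

section Digraph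

variable {V : Type*} [Fintype V] {A : V → V → Prop}

noncomputable def inNbrs (A : V → V → Prop) (v : V) : Finset V := {u | A u v}

noncomputable def outNbrs (A : V → V → Prop) (v : V) : Finset V := {w | A v w}

@[simp] theorem mem_inNbrs {u v : V} : u ∈ inNbrs A v ↔ A u v := by simp [inNbrs]

@[simp] theorem mem_outNbrs {v w : V} : w ∈ outNbrs A v ↔ A v w := by simp [outNbrs]

theorem card_inNbrs (v : V) : #(inNbrs A v) = inDeg A v := rfl

theorem card_outNbrs (v : V) : #(outNbrs A v) = outDeg A v := rfl

theorem commonOut_anti {S T : Finset V} (hST : S ⊆ T) : commonOut A T ⊆ commonOut A S :=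
  monotone_filter_right _ fun _ _ hT v hv => hT v (hST hv)

theorem commonOut_insert (v : V) (S : Finset V) :
    commonOut A (insert v S) = {w ∈ outNbrs A v | S ⊆ inNbrs A w} := by
  rw [commonOut, outNbrs, filter_filter]
  exact filter_congr fun w _ => by simp [subset_iff]

theorem notMem_of_subset_inNbrs (hA : Irreflexive A) {v : V} {R : Finset V}
    (hR : R ⊆ inNbrs A v) : v ∉ R :=
  fun hv => hA v (mem_inNbrs.mp (hR hv))

theorem sum_inDeg_eq_sum_outDeg (A : V → V → Prop) : ∑ v, inDeg A v = ∑ v, outDeg A v := by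
  simp only [inDeg, outDeg, card_filter]
  exact sum_comm

theorem sum_card_commonOut_powersetCard (A : V → V → Prop) (k : ℕ) :
    ∑ S ∈ powersetCard k univ, #(commonOut A S) = ∑ w, (inDeg A w).choose k := by
  simp only [commonOut, card_filter]
  rw [sum_comm]
  refine sum_congr rfl fun w _ => ?_
  rw [← card_filter, ← card_inNbrs, ← card_powersetCard]
  congr 1
  ext S
  simp [subset_iff, and_comm]

theorem sum_card_commonIn_powersetCard (A : V → V → Prop) (k : ℕ) :
    ∑ S ∈ powersetCard k univ, #(commonIn A S) = ∑ w, (outDeg A w).choose k :=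
  sum_card_commonOut_powersetCard (fun u w => A w u) k

namespace IsLiking

variable {t lam : ℕ}

theorem card_le_of_forall_adj (h : IsLiking A t lam) {T Y : Finset V} (hT : t ≤ #T)
    (hTY : ∀ u ∈ T, ∀ w ∈ Y, A u w) : #Y ≤ lam := by
  obtain ⟨P, hPT, hP⟩ := exists_subset_card_eq hT
  calc #Y ≤ #(commonOut A P) :=
        card_le_card fun w hw => mem_filter.mpr ⟨mem_univ w, fun u hu => hTY u (hPT hu) w hw⟩
    _ = lam := h P hP

theorem card_commonIn_lt (h : IsLiking A t lam) (hlt : lam < t) {S : Finset V} (hS : #S = t) :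
    #(commonIn A S) < t := by
  by_contra! hle
  have := h.card_le_of_forall_adj hle fun u hu w hw => (mem_filter.mp hu).2 w hw
  omega

theorem le_outDeg (h : IsLiking A (lam + 1) lam) (hn : lam + 1 ≤ Fintype.card V) (v : V) :
    lam ≤ outDeg A v := by
  obtain ⟨S, hvS, -, hS⟩ := exists_subsuperset_card_eq (subset_univ {v})
    (by rw [card_singleton]; omega) (hn.trans_eq card_univ.symm)
  rw [← h S hS, ← card_outNbrs]
  exact card_le_card fun w hw =>
    mem_outNbrs.mpr ((mem_filter.mp hw).2 v (hvS (mem_singleton_self v)))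

theorem card_commonOut_insert_lt (hA : Irreflexive A) (h : IsLiking A (lam + 1) lam) {v : V}
    {R : Finset V} (hRU : R ⊆ inNbrs A v) (hR : #R = lam + 1) :
    #(commonOut A (insert v R)) < lam := by
  have hv : v ∈ commonOut A R := mem_filter.mpr ⟨mem_univ v, fun u hu => mem_inNbrs.mp (hRU hu)⟩
  have hsub : commonOut A (insert v R) ⊆ (commonOut A R).erase v := fun w hw =>
    mem_erase.mpr ⟨fun hwv => hA v (hwv ▸ (mem_filter.mp hw).2 v (mem_insert_self v R)),
      commonOut_anti (subset_insert v R) hw⟩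
  calc #(commonOut A (insert v R)) ≤ #((commonOut A R).erase v) := card_le_card hsub
    _ < #(commonOut A R) := card_erase_lt_of_mem hv
    _ = lam := h R hR

theorem lt_card_commonOut_insert (hA : Irreflexive A) (h : IsLiking A (lam + 1) lam) {v : V}
    (hU : lam < inDeg A v) {R : Finset V} (hRU : R ⊆ inNbrs A v) (hR : #R + 1 = lam) :
    lam < #(commonOut A (insert v R)) := by
  set X := commonOut A (insert v R)
  have hvR := notMem_of_subset_inNbrs hA hRU
  have hXq : ∀ q ∈ inNbrs A v, q ∉ R →
      commonOut A (insert q (insert v R)) ⊆ X ∧ #(commonOut A (insert q (insert v R))) = lam := by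
    intro q hq hqR
    have hqvR : q ∉ insert v R := by
      rw [mem_insert, not_or]
      exact ⟨by rintro rfl; exact hA q (mem_inNbrs.mp hq), hqR⟩
    exact ⟨commonOut_anti (subset_insert _ _),
      h _ (by rw [card_insert_of_notMem hqvR, card_insert_of_notMem hvR]; omega)⟩
  obtain ⟨q, hqU, hqR⟩ : ∃ q ∈ inNbrs A v, q ∉ R :=
    not_subset.mp fun hsub => by have := card_le_card hsub; rw [card_inNbrs] at this; omega
  have hlam : lam ≤ #X := (hXq q hqU hqR).2 ▸ card_le_card (hXq q hqU hqR).1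
  by_contra! hX
  -- `X` then equals `commonOut A (insert u (insert v R))` for every in-neighbour `u ∉ R`
  have hall : ∀ u ∈ inNbrs A v, ∀ w ∈ insert v X, A u w := by
    intro u hu
    rw [forall_mem_insert]
    refine ⟨mem_inNbrs.mp hu, fun w hw => ?_⟩
    by_cases huR : u ∈ R
    · exact (mem_filter.mp hw).2 u (mem_insert_of_mem huR)
    · rw [← eq_of_subset_of_card_le (hXq u hu huR).1 ((hXq u hu huR).2 ▸ hX)] at hw
      exact (mem_filter.mp hw).2 u (mem_insert_self _ _)
  have hvX : v ∉ X := fun hv => hA v ((mem_filter.mp hv).2 v (mem_insert_self v R))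
  have := h.card_le_of_forall_adj hU hall
  rw [card_insert_of_notMem hvX] at this
  omega

theorem inDeg_le_outDeg (hA : Irreflexive A) (hlam : lam ≠ 0) (h : IsLiking A (lam + 1) lam)
    (hn : lam + 1 ≤ Fintype.card V) (v : V) : inDeg A v ≤ outDeg A v := by
  rcases le_or_gt (inDeg A v) lam with hsmall | hbig
  · exact hsmall.trans (h.le_outDeg hn v)
  rw [← card_inNbrs, ← card_outNbrs]
  have hcard : ∀ R ⊆ inNbrs A v, #R = lam → #(commonOut A (insert v R)) = lam := fun R hRU hR =>
    h _ (by rw [card_insert_of_notMem (notMem_of_subset_inNbrs hA hRU), hR])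
  obtain rfl | hlam2 : lam = 1 ∨ 2 ≤ lam := by omega
  · refine card_points_le_card_blocks (inNbrs A) (k := 1) (μ := 0)
      one_ne_zero hbig (fun R hRU hR => ?_) (fun R hRU hR => ?_)
    · rw [← commonOut_insert]
      exact Nat.lt_one_iff.mp (h.card_commonOut_insert_lt hA hRU hR)
    · rw [← commonOut_insert, hcard R hRU hR]
      exact one_pos
  · obtain ⟨l, rfl⟩ := Nat.exists_eq_add_of_le' hlam2
    refine card_points_le_card_blocks (inNbrs A) (k := l + 1)
      (μ := l + 2) l.succ_ne_zero (by rw [card_inNbrs]; omega)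
      (fun R hRU hR => ?_) (fun R hRU hR => ?_)
    · rw [← commonOut_insert]
      exact hcard R hRU hR
    · rw [← commonOut_insert]
      exact h.lt_card_commonOut_insert hA hbig hRU (by omega)

theorem inDeg_eq_outDeg (hA : Irreflexive A) (hlam : lam ≠ 0) (h : IsLiking A (lam + 1) lam)
    (hn : lam + 1 ≤ Fintype.card V) (v : V) : inDeg A v = outDeg A v :=
  (sum_eq_sum_iff_of_le fun v _ => h.inDeg_le_outDeg hA hlam hn v).mp
    (sum_inDeg_eq_sum_outDeg A) v (mem_univ v)

end IsLiking

end Digraph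

/-- Every `(λ+1,λ)`-liking digraph is a two-way `(λ+1,λ)`-liking digraph. -/
theorem stmt_8 {V : Type*} [Fintype V] (A : V → V → Prop) (hA : Irreflexive A)
    (lam : ℕ) (hlam : 0 < lam)
    (h : IsLiking A (lam + 1) lam) :
    IsTwoWayLiking A (lam + 1) lam := by
  refine ⟨h, fun S hS => ?_⟩
  have hn : lam + 1 ≤ Fintype.card V := hS ▸ card_le_univ S
  have hsum : ∑ T ∈ powersetCard (lam + 1) univ, #(commonIn A T)
      = ∑ T ∈ powersetCard (lam + 1) univ, lam :=
    calc ∑ T ∈ powersetCard (lam + 1) univ, #(commonIn A T)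
        = ∑ w, (outDeg A w).choose (lam + 1) := sum_card_commonIn_powersetCard A _
      _ = ∑ w, (inDeg A w).choose (lam + 1) := by
        simp_rw [h.inDeg_eq_outDeg hA hlam.ne' hn]
      _ = ∑ T ∈ powersetCard (lam + 1) univ, #(commonOut A T) :=
        (sum_card_commonOut_powersetCard A _).symm
      _ = ∑ T ∈ powersetCard (lam + 1) univ, lam :=
        sum_congr rfl fun T hT => h T (mem_powersetCard.mp hT).2
  have hle : ∀ T ∈ powersetCard (lam + 1) univ, #(commonIn A T) ≤ lam := fun T hT =>
    Nat.lt_succ_iff.mp (h.card_commonIn_lt lam.lt_succ_self (mem_powersetCard.mp hT).2)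
  exact (sum_eq_sum_iff_of_le hle).mp hsum S (mem_powersetCard.mpr ⟨subset_univ S, hS⟩)
end

section
/- Let D be a two-way (λ+1,λ)-liking digraph with λ ≥ 2 whose complement is not weakly connected, so that V(D) partitions as X ∪ Y with every arc between X and Y present in both directions in D, and assume |X| ≥ λ+1. Then |Y| ≤ λ, and the induced subdigraph D[X] is a (λ+1, λ−|Y|)-liking digraph. -/
/-!
Every vertex of `Y` is a common out-neighbour of any set `S ⊆ X`, so the `λ` common
out-neighbours of `λ + 1` vertices of `X` are all of `Y` together with those lying in `X`.
Hence `|Y| ≤ λ`, and the common out-neighbours inside `X` number exactly `λ - |Y|`.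
-/

open scoped Classical
open Finset

section Partition

variable {V : Type*} [Fintype V] [DecidableEq V] {A : V → V → Prop} {X Y S : Finset V}

theorem commonOut_eq_filter_union (hunion : X ∪ Y = univ)
    (harc : ∀ x ∈ X, ∀ y ∈ Y, A x y) (hS : S ⊆ X) :
    commonOut A S = (X.filter fun w => ∀ v ∈ S, A v w) ∪ Y := by
  ext w
  simp only [commonOut, mem_filter, mem_univ, true_and, mem_union]
  constructor
  · intro hw
    have hwXY : w ∈ X ∪ Y := hunion ▸ mem_univ w
    rcases mem_union.mp hwXY with hwX | hwY
    · exact Or.inl ⟨hwX, hw⟩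
    · exact Or.inr hwY
  · rintro (⟨-, hw⟩ | hwY) v hv
    · exact hw v hv
    · exact harc v (hS hv) w hwY

theorem card_commonOut_eq_card_filter_add (hunion : X ∪ Y = univ) (hdisj : Disjoint X Y)
    (harc : ∀ x ∈ X, ∀ y ∈ Y, A x y) (hS : S ⊆ X) :
    (commonOut A S).card = (X.filter fun w => ∀ v ∈ S, A v w).card + Y.card := by
  rw [commonOut_eq_filter_union hunion harc hS,
    card_union_of_disjoint (hdisj.mono_left (filter_subset _ _))]

end Partition

theorem stmt_11_general {V : Type*} [Fintype V] [DecidableEq V] (A : V → V → Prop)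
    (lam : ℕ)
    (h : IsTwoWayLiking A (lam + 1) lam)
    (X Y : Finset V) (hunion : X ∪ Y = Finset.univ) (hdisj : Disjoint X Y)
    (harc : ∀ x ∈ X, ∀ y ∈ Y, A x y ∧ A y x)
    (hX : lam + 1 ≤ X.card) :
    Y.card ≤ lam ∧
      ∀ S : Finset V, S ⊆ X → S.card = lam + 1 →
        (X.filter fun w => ∀ v ∈ S, A v w).card = lam - Y.card := by
  have hXY : ∀ x ∈ X, ∀ y ∈ Y, A x y := fun x hx y hy => (harc x hx y hy).1
  have hcount : ∀ S ⊆ X, S.card = lam + 1 →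
      (X.filter fun w => ∀ v ∈ S, A v w).card + Y.card = lam := fun S hS hcard =>
    (card_commonOut_eq_card_filter_add hunion hdisj hXY hS).symm.trans (h.1 S hcard)
  obtain ⟨S₀, hS₀, hS₀card⟩ := exists_subset_card_eq hX
  have hY : Y.card ≤ lam := by
    have := hcount S₀ hS₀ hS₀card
    omega
  refine ⟨hY, fun S hS hcard => ?_⟩
  have := hcount S hS hcard
  omega

/-- If the complement of a two-way `(λ+1,λ)`-liking digraph (`λ ≥ 2`) is
disconnected, witnessed by a partition `X ∪ Y` with all arcs between `X` and
`Y` present in both directions, and `|X| ≥ λ+1`, then `|Y| ≤ λ` and `D[X]` is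
a `(λ+1, λ-|Y|)`-liking digraph. -/
theorem stmt_11 {V : Type*} [Fintype V] [DecidableEq V] (A : V → V → Prop)
    (hA : Irreflexive A) (lam : ℕ) (hlam : 2 ≤ lam)
    (h : IsTwoWayLiking A (lam + 1) lam)
    (X Y : Finset V) (hunion : X ∪ Y = Finset.univ) (hdisj : Disjoint X Y)
    (harc : ∀ x ∈ X, ∀ y ∈ Y, A x y ∧ A y x)
    (hX : lam + 1 ≤ X.card) :
    Y.card ≤ lam ∧
      ∀ S : Finset V, S ⊆ X → S.card = lam + 1 →
        (X.filter fun w => ∀ v ∈ S, A v w).card = lam - Y.card :=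
  stmt_11_general A lam h X Y hunion hdisj harc hX
end

section
/- In any (λ+1,λ)-liking digraph D in which every vertex satisfies d⁺(v) = d⁻(v), every set of λ+1 distinct vertices has at most λ common in-neighbors, and the sum over all (λ+1)-subsets S of V(D) of the number of common in-neighbors of S equals λ times the number of (λ+1)-subsets of V(D). -/
/-!
If `λ + 1` vertices had `λ + 1` common in-neighbors, those in-neighbors would have the original
`λ + 1` vertices as common out-neighbors, one more than the liking property allows.
For the sum, count pairs (`S`, common in-neighbor of `S`) by the vertex: each `w` is a common
in-neighbor of exactly `C(d⁺(w), λ + 1)` sets. Dually the liking property gives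
`λ · C(n, λ + 1) = ∑ C(d⁻(w), λ + 1)`, and `d⁺ = d⁻` makes the two sums equal.
-/

open scoped Classical
open Finset

section Liking

variable {V : Type*} [Fintype V] (A : V → V → Prop)

theorem subset_commonOut_iff_subset_commonIn {S T : Finset V} :
    S ⊆ commonOut A T ↔ T ⊆ commonIn A S := by
  simp only [subset_iff, commonOut, commonIn, mem_filter, mem_univ, true_and]
  exact ⟨fun h t ht s hs => h hs t ht, fun h s hs t ht => h ht s hs⟩

theorem card_commonIn_lt_of_isLiking {t lam : ℕ} (h : IsLiking A t lam) {S : Finset V}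
    (hS : lam < S.card) : (commonIn A S).card < t := by
  by_contra! ht
  obtain ⟨T, hTS, hT⟩ := exists_subset_card_eq ht
  have := card_le_card ((subset_commonOut_iff_subset_commonIn A).2 hTS)
  rw [h T hT] at this
  omega

theorem sum_card_commonOut_eq_sum_choose_inDeg (k : ℕ) :
    ∑ S ∈ univ.powersetCard k, (commonOut A S).card = ∑ w, (inDeg A w).choose k := by
  refine (sum_card_bipartiteAbove_eq_sum_card_bipartiteBelow (t := univ)
    (r := fun S w => ∀ v ∈ S, A v w)).trans (sum_congr rfl fun w _ => ?_)
  rw [inDeg, ← card_powersetCard]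
  congr 1
  ext S
  simp [bipartiteBelow, mem_powersetCard, subset_iff, and_comm]

theorem sum_card_commonIn_eq_sum_choose_outDeg (k : ℕ) :
    ∑ S ∈ univ.powersetCard k, (commonIn A S).card = ∑ w, (outDeg A w).choose k :=
  sum_card_commonOut_eq_sum_choose_inDeg (flip A) k

theorem sum_card_commonOut_of_isLiking {t lam : ℕ} (h : IsLiking A t lam) :
    ∑ S ∈ (univ : Finset V).powersetCard t, (commonOut A S).card =
      lam * ((univ : Finset V).powersetCard t).card := by
  rw [sum_congr rfl fun S hS => h S (mem_powersetCard.1 hS).2, sum_const, smul_eq_mul, mul_comm]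

end Liking

theorem stmt_12_general {V : Type*} [Fintype V] (A : V → V → Prop)
    (lam : ℕ)
    (h : IsLiking A (lam + 1) lam)
    (hdeg : ∀ v : V, outDeg A v = inDeg A v) :
    (∀ S : Finset V, S.card = lam + 1 → (commonIn A S).card ≤ lam) ∧
      ∑ S ∈ (Finset.univ : Finset V).powersetCard (lam + 1), (commonIn A S).card
        = lam * ((Finset.univ : Finset V).powersetCard (lam + 1)).card := by
  refine ⟨fun S hS => Nat.lt_succ_iff.1 (card_commonIn_lt_of_isLiking A h (by omega)), ?_⟩
  calc ∑ S ∈ univ.powersetCard (lam + 1), (commonIn A S).card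
      = ∑ w, (outDeg A w).choose (lam + 1) := sum_card_commonIn_eq_sum_choose_outDeg A _
    _ = ∑ w, (inDeg A w).choose (lam + 1) := by simp_rw [hdeg]
    _ = ∑ S ∈ univ.powersetCard (lam + 1), (commonOut A S).card :=
      (sum_card_commonOut_eq_sum_choose_inDeg A _).symm
    _ = lam * (univ.powersetCard (lam + 1)).card := sum_card_commonOut_of_isLiking A h

/-- In a `(λ+1,λ)`-liking digraph in which every vertex has equal out- and
in-degree, every `λ+1` vertices have at most `λ` common in-neighbors, and the
total count of common in-neighbors over all `(λ+1)`-subsets equals `λ` times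
the number of such subsets. -/
theorem stmt_12 {V : Type*} [Fintype V] (A : V → V → Prop) (hA : Irreflexive A)
    (lam : ℕ) (hlam : 0 < lam)
    (h : IsLiking A (lam + 1) lam)
    (hdeg : ∀ v : V, outDeg A v = inDeg A v) :
    (∀ S : Finset V, S.card = lam + 1 → (commonIn A S).card ≤ lam) ∧
      ∑ S ∈ (Finset.univ : Finset V).powersetCard (lam + 1), (commonIn A S).card
        = lam * ((Finset.univ : Finset V).powersetCard (lam + 1)).card :=
  stmt_12_general A lam h hdeg
end

section
/- In an (n,k,λ)-SBIBD with n ≥ 2λ, for every nonempty family of blocks B_{s}, s ∈ S, the size of their common intersection satisfies |⋂_{s∈S} B_s| ≤ n − |S|. -/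
open scoped Classical
open Finset

/-!
Write `t` for the size of the intersection and `s = |S|`. A point of the intersection lies in all
`s` blocks, so `s ≤ k`, and any block of `S` contains the intersection, so `t ≤ k`. Two points of
the intersection force `s ≤ λ`, and two blocks in `S` force `t ≤ λ`. Hence, when the intersection
is nonempty, `t + s ≤ max (k + 1) (2λ) ≤ n`.
-/

namespace Finset

variable {ι V : Type*} [Fintype V] [DecidableEq V] {B : ι → Finset V} {S : Finset ι}

theorem card_le_card_filter_mem_of_mem_inf [Fintype ι] {v : V} (hv : v ∈ S.inf B) :
    #S ≤ #(univ.filter fun i => v ∈ B i) :=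
  card_le_card fun i hi => mem_filter.mpr ⟨mem_univ i, mem_inf.mp hv i hi⟩

theorem card_le_card_filter_mem_mem_of_mem_inf [Fintype ι] {u w : V} (hu : u ∈ S.inf B)
    (hw : w ∈ S.inf B) :
    #S ≤ #(univ.filter fun i => u ∈ B i ∧ w ∈ B i) :=
  card_le_card fun i hi => mem_filter.mpr ⟨mem_univ i, mem_inf.mp hu i hi, mem_inf.mp hw i hi⟩

theorem card_inf_le_card_inter {i j : ι} (hi : i ∈ S) (hj : j ∈ S) :
    #(S.inf B) ≤ #(B i ∩ B j) :=
  card_le_card (le_inf (inf_le hi) (inf_le hj))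

theorem card_inf_add_card_le [Fintype ι] {k lam : ℕ}
    (hblock : ∀ i, #(B i) ≤ k)
    (hvar : ∀ v, #(univ.filter fun i => v ∈ B i) ≤ k)
    (hpair : ∀ u v, u ≠ v → #(univ.filter fun i => u ∈ B i ∧ v ∈ B i) ≤ lam)
    (hblockpair : ∀ i j, i ≠ j → #(B i ∩ B j) ≤ lam)
    (hS : S.Nonempty) (hI : (S.inf B).Nonempty) :
    #(S.inf B) + #S ≤ max (k + 1) (2 * lam) := by
  obtain ⟨v, hv⟩ := hI
  obtain ⟨i₀, hi₀⟩ := hS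
  have hsk : #S ≤ k := (card_le_card_filter_mem_of_mem_inf hv).trans (hvar v)
  have htk : #(S.inf B) ≤ k := (card_le_card (inf_le hi₀)).trans (hblock i₀)
  rcases le_or_gt #(S.inf B) 1 with ht | ht
  · exact le_max_of_le_left (by omega)
  rcases le_or_gt #S 1 with hs | hs
  · exact le_max_of_le_left (by omega)
  obtain ⟨u, hu, w, hw, huw⟩ := one_lt_card.mp ht
  obtain ⟨i, hi, j, hj, hij⟩ := one_lt_card.mp hs
  have hsl : #S ≤ lam :=
    (card_le_card_filter_mem_mem_of_mem_inf hu hw).trans (hpair u w huw)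
  have htl : #(S.inf B) ≤ lam := (card_inf_le_card_inter hi hj).trans (hblockpair i j hij)
  exact le_max_of_le_right (by omega)

end Finset

theorem stmt_17_general {V : Type*} [Fintype V] [DecidableEq V] (n k lam : ℕ)
    (B : Fin n → Finset V)
    (hkn : k < n) (hn : 2 * lam ≤ n)
    (hblock : ∀ i, (B i).card = k)
    (hvar : ∀ v : V, (Finset.univ.filter fun i => v ∈ B i).card = k)
    (hpair : ∀ u v : V, u ≠ v →
      (Finset.univ.filter fun i => u ∈ B i ∧ v ∈ B i).card = lam)
    (hblockpair : ∀ i j : Fin n, i ≠ j → (B i ∩ B j).card = lam) :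
    ∀ S : Finset (Fin n), S.Nonempty → (S.inf B).card ≤ n - S.card := by
  intro S hS
  rcases (S.inf B).eq_empty_or_nonempty with hI | hI
  · simp [hI]
  have hbound := card_inf_add_card_le (fun i => (hblock i).le) (fun v => (hvar v).le)
    (fun u v huv => (hpair u v huv).le) (fun i j hij => (hblockpair i j hij).le) hS hI
  have hmax : max (k + 1) (2 * lam) ≤ n := max_le hkn hn
  omega

/-- In an `(n,k,λ)`-SBIBD with `n ≥ 2λ`, every nonempty family of blocks has
common intersection of size at most `n` minus the number of blocks. -/
theorem stmt_17 {V : Type*} [Fintype V] [DecidableEq V] (n k lam : ℕ)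
    (hV : Fintype.card V = n) (B : Fin n → Finset V)
    (hkn : k < n) (hlam : 0 < lam) (hn : 2 * lam ≤ n)
    (hblock : ∀ i, (B i).card = k)
    (hvar : ∀ v : V, (Finset.univ.filter fun i => v ∈ B i).card = k)
    (hpair : ∀ u v : V, u ≠ v →
      (Finset.univ.filter fun i => u ∈ B i ∧ v ∈ B i).card = lam)
    (hblockpair : ∀ i j : Fin n, i ≠ j → (B i ∩ B j).card = lam)
    (hparam : lam * (n - 1) = k * (k - 1)) :
    ∀ S : Finset (Fin n), S.Nonempty → (S.inf B).card ≤ n - S.card :=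
  stmt_17_general n k lam B hkn hn hblock hvar hpair hblockpair
end
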